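/- arXiv:2603.16986 — 2 statements merged into one kernel-verified Lean document; each statement's English description precedes it below -/
import Mathlib

section
/- For all y ∈ ℝ, Σ_{r ∈ ℤ} sinc²(y - r) = 1, where sinc(ξ) = sin(πξ)/(πξ) and sinc(0) = 1. -/
/-!
The hat function `tri v = max 0 (1 - |v|)` has Fourier transform `sinc²`, so the modulated hat
`f v = e^{2πivy} tri v` has Fourier transform `w ↦ sinc² (y - w)`. Poisson summation at the origin
gives `∑ₙ sinc² (y - n) = ∑ₙ f n`, and the right-hand side is `f 0 = 1` because `tri` vanishes at
every nonzero integer.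
-/

open scoped Real

/-- Normalized sinc: sinc ξ = sin(πξ)/(πξ), sinc 0 = 1. -/
noncomputable def sinc (x : ℝ) : ℝ :=
  if x = 0 then 1 else Real.sin (π * x) / (π * x)

open Function Filter Set Asymptotics intervalIntegral
open scoped FourierTransform

lemma HasCompactSupport.isBigO_cocompact {α E F : Type*} [TopologicalSpace α] [T2Space α]
    [NormedAddCommGroup E] [Norm F] {f : α → E} (hf : HasCompactSupport f) (g : α → F) :
    f =O[cocompact α] g := by
  rw [hasCompactSupport_iff_eventuallyEq, coclosedCompact_eq_cocompact] at hf
  exact hf.isBigO.trans (isBigO_zero _ _)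

lemma fourierChar_add_fourierChar_neg (t : ℝ) :
    (𝐞 t : ℂ) + 𝐞 (-t) = (2 * Real.cos (2 * π * t) : ℝ) := by
  rw [Real.fourierChar_apply, Real.fourierChar_apply]
  push_cast
  rw [Complex.two_cos]
  ring_nf

lemma fourier_fourierChar_smul {E : Type*} [NormedAddCommGroup E] [NormedSpace ℂ E]
    (f : ℝ → E) (y w : ℝ) : 𝓕 (fun v ↦ 𝐞 (v * y) • f v) w = 𝓕 f (w - y) := by
  simp_rw [Real.fourier_real_eq, smul_smul, ← AddChar.map_add_eq_mul]
  congr! 4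
  ring

lemma sinc_neg (x : ℝ) : sinc (-x) = sinc x := by
  unfold sinc
  simp [mul_neg, neg_div_neg_eq]

lemma sinc_sq_le_one_div_sq {x : ℝ} (hx : x ≠ 0) : sinc x ^ 2 ≤ 1 / x ^ 2 := by
  calc sinc x ^ 2 = Real.sin (π * x) ^ 2 / (π * x) ^ 2 := by rw [sinc, if_neg hx, div_pow]
    _ ≤ 1 / (π * x) ^ 2 := by gcongr; exact Real.sin_sq_le_one _
    _ ≤ 1 / x ^ 2 := one_div_le_one_div_of_le (by positivity) <| by
      rw [mul_pow]; exact le_mul_of_one_le_left (sq_nonneg x) (by nlinarith [Real.pi_gt_three])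

lemma summable_sinc_sq_sub (y : ℝ) : Summable fun n : ℤ ↦ sinc (y - n) ^ 2 := by
  refine Summable.of_norm_bounded_eventually
    ((Real.summable_one_div_int_add_rpow (-y) 2).mpr one_lt_two) ?_
  have hfin : {n : ℤ | (n : ℝ) = y}.Finite :=
    Set.Subsingleton.finite fun m hm n hn ↦ by exact_mod_cast hm.trans hn.symm
  filter_upwards [hfin.compl_mem_cofinite] with n hn
  have hsq : |(n : ℝ) + -y| ^ (2 : ℝ) = (y - n) ^ 2 := by rw [Real.rpow_two, sq_abs]; ring
  rw [Real.norm_of_nonneg (sq_nonneg _), hsq]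
  exact sinc_sq_le_one_div_sq (sub_ne_zero.mpr (Ne.symm hn))

lemma integral_cos_mul_one_sub {a : ℝ} (ha : a ≠ 0) :
    ∫ v in (0 : ℝ)..1, Real.cos (a * v) * (1 - v) = (1 - Real.cos a) / a ^ 2 := by
  have hderiv : ∀ v : ℝ, HasDerivAt
      (fun v ↦ (1 - v) * Real.sin (a * v) / a - Real.cos (a * v) / a ^ 2)
      (Real.cos (a * v) * (1 - v)) v := by
    intro v
    have hlin : HasDerivAt (fun v ↦ a * v) a v := by simpa using (hasDerivAt_id v).const_mul a
    refine (((((hasDerivAt_id' v).const_sub 1).fun_mul hlin.sin).div_const a).fun_sub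
      (hlin.cos.div_const (a ^ 2))).congr_deriv ?_
    field_simp
    ring
  rw [integral_eq_sub_of_hasDerivAt (fun v _ ↦ hderiv v)
    (Continuous.intervalIntegrable (by fun_prop) _ _)]
  simp only [sub_self, mul_one, zero_mul, zero_div, mul_zero, Real.sin_zero, Real.cos_zero]
  field_simp
  ring

lemma integral_two_cos_mul_one_sub_eq_sinc_sq (ξ : ℝ) :
    ∫ v in (0 : ℝ)..1, 2 * Real.cos (2 * π * (v * ξ)) * (1 - v) = sinc ξ ^ 2 := by
  rcases eq_or_ne ξ 0 with rfl | hξ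
  · simp only [mul_zero, Real.cos_zero, mul_one]
    rw [integral_const_mul, integral_sub intervalIntegrable_const intervalIntegrable_id]
    norm_num [sinc]
  have hcos : Real.cos (2 * π * ξ) = 1 - 2 * Real.sin (π * ξ) ^ 2 := by
    rw [mul_assoc, Real.cos_two_mul, Real.cos_sq']
    ring
  have hv : ∀ v : ℝ, 2 * Real.cos (2 * π * (v * ξ)) * (1 - v)
      = 2 * (Real.cos (2 * π * ξ * v) * (1 - v)) := fun v ↦ by ring_nf
  simp only [hv]
  rw [integral_const_mul, integral_cos_mul_one_sub (by positivity), hcos, sinc, if_neg hξ]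
  field_simp
  ring

noncomputable def tri (v : ℝ) : ℝ := max 0 (1 - |v|)

lemma tri_neg (v : ℝ) : tri (-v) = tri v := by simp [tri]

lemma tri_eq_one_sub {v : ℝ} (h₀ : 0 ≤ v) (h₁ : v ≤ 1) : tri v = 1 - v := by
  rw [tri, abs_of_nonneg h₀, max_eq_right (by linarith)]

lemma tri_eq_zero {v : ℝ} (h : 1 ≤ |v|) : tri v = 0 :=
  max_eq_left (by linarith)

lemma support_tri_subset : support tri ⊆ Ioo (-1) 1 := fun _ hv ↦
  abs_lt.mp (not_le.mp fun h ↦ hv (tri_eq_zero h))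

@[fun_prop]
lemma continuous_tri : Continuous tri :=
  continuous_const.max (continuous_const.sub continuous_abs)

lemma hasCompactSupport_tri : HasCompactSupport tri :=
  .of_support_subset_isCompact (isCompact_Icc (a := -1) (b := 1))
    (support_tri_subset.trans Ioo_subset_Icc_self)

lemma fourier_tri (ξ : ℝ) : 𝓕 (fun v ↦ (tri v : ℂ)) ξ = (sinc ξ ^ 2 : ℝ) := by
  set g : ℝ → ℂ := fun v ↦ 𝐞 (-(v * ξ)) • (tri v : ℂ)
  have hg : Continuous g := by fun_prop
  have hsupp : support g ⊆ Ioc (-1) 1 := fun v hv ↦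
    Ioo_subset_Ioc_self (support_tri_subset fun h ↦ hv (by simp [g, h]))
  -- `tri` is even, so folding `[-1, 0]` onto `[0, 1]` turns the integrand into a cosine.
  have hfold : ∀ v ∈ uIcc (0 : ℝ) 1,
      g (-v) + g v = ((2 * Real.cos (2 * π * (v * ξ)) * (1 - v) : ℝ) : ℂ) := by
    rintro v ⟨hv₀, hv₁⟩
    rw [min_eq_left zero_le_one] at hv₀
    rw [max_eq_right zero_le_one] at hv₁
    simp only [g, neg_mul, neg_neg, tri_neg, tri_eq_one_sub hv₀ hv₁, Circle.smul_def, smul_eq_mul,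
      ← add_mul, fourierChar_add_fourierChar_neg]
    push_cast
    ring
  calc 𝓕 (fun v ↦ (tri v : ℂ)) ξ = ∫ v in (-1 : ℝ)..1, g v := by
        rw [Real.fourier_real_eq, integral_eq_integral_of_support_subset hsupp]
    _ = (∫ v in (0 : ℝ)..1, g (-v)) + ∫ v in (0 : ℝ)..1, g v := by
        rw [← integral_add_adjacent_intervals (b := 0) (hg.intervalIntegrable _ _)
          (hg.intervalIntegrable _ _), integral_comp_neg, neg_zero]
    _ = ∫ v in (0 : ℝ)..1, ((2 * Real.cos (2 * π * (v * ξ)) * (1 - v) : ℝ) : ℂ) := by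
        rw [← integral_add (f := fun v ↦ g (-v)) ((hg.comp continuous_neg).intervalIntegrable _ _)
          (hg.intervalIntegrable _ _)]
        exact integral_congr hfold
    _ = (sinc ξ ^ 2 : ℝ) := by rw [integral_ofReal, integral_two_cos_mul_one_sub_eq_sinc_sq]

/-- partition-of-unity identity for the squared sinc kernel:
Σ_{r∈ℤ} sinc²(y - r) = 1 for all real y. -/
theorem sinc_sq_partition_of_unity (y : ℝ) :
    ∑' r : ℤ, sinc (y - (r : ℝ)) ^ 2 = 1 := by
  set f : ℝ → ℂ := fun v ↦ 𝐞 (v * y) • (tri v : ℂ)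
  have hf : HasCompactSupport f := (hasCompactSupport_tri.comp_left Complex.ofReal_zero).smul_left
  have hFf : ∀ w : ℝ, 𝓕 f w = (sinc (y - w) ^ 2 : ℝ) := fun w ↦ by
    rw [fourier_fourierChar_smul, fourier_tri, ← sinc_neg, neg_sub]
  have hf_tsum : ∑' n : ℤ, f (0 + n) = 1 := by
    rw [tsum_eq_single 0 fun n hn ↦ ?_]
    · simp [f, tri]
    · simp [f, tri_eq_zero (v := n) (by rw [← Int.cast_abs]; exact_mod_cast Int.one_le_abs hn)]
  have hFf_summable : Summable fun n : ℤ ↦ 𝓕 f n := by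
    simpa only [hFf] using Complex.summable_ofReal.mpr (summable_sinc_sq_sub y)
  have hpoisson := Real.tsum_eq_tsum_fourier_of_rpow_decay_of_summable (by fun_prop) one_lt_two
    (hf.isBigO_cocompact _) hFf_summable 0
  simp only [hf_tsum, hFf, QuotientAddGroup.mk_zero, fourier_eval_zero, mul_one] at hpoisson
  exact_mod_cast hpoisson.symm
end

section
/- Fix N ≥ 2, a ∈ (0,1), b > 0, and for ℓ ∈ ℤ with |ℓ| > 4/(ab) define t^{[ℓ]}(x) = (1/a) Σ_{r∈ℤ} sinc^N((r - (x - abℓ/2))/a) sinc^N((r - (x + abℓ/2))/a). Then there exists a constant C = C(N, a, b) > 0, independent of ℓ, such that sup_{x ∈ [-1/2, 1/2]} |t^{[ℓ]}(x)| ≤ C |ℓ|^{-N}. -/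
open scoped Real

lemma abs_sinc_le_one (x : ℝ) : |sinc x| ≤ 1 := by
  unfold sinc
  split_ifs with h
  · simp
  · rw [abs_div]
    have h1 : |Real.sin (π * x)| ≤ |π * x| := Real.abs_sin_le_abs
    have h2 : 0 < |π * x| := abs_pos.mpr (mul_ne_zero Real.pi_ne_zero h)
    exact div_le_one_of_le₀ h1 h2.le

lemma abs_sinc_le (x : ℝ) (hx : x ≠ 0) : |sinc x| ≤ 1 / (π * |x|) := by
  unfold sinc
  rw [if_neg hx, abs_div]
  have h1 : |Real.sin (π * x)| ≤ 1 :=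
    abs_le.mpr ⟨Real.neg_one_le_sin _, Real.sin_le_one _⟩
  have h2 : |π * x| = π * |x| := by
    rw [abs_mul, abs_of_pos Real.pi_pos]
  rw [h2]
  have h3 : 0 < π * |x| := by positivity
  gcongr

/-- Uniform majorant for one shifted sinc power. -/
lemma sinc_pow_bound (N : ℕ) (hN : 2 ≤ N) (a : ℝ) (ha : 0 < a) (ha1 : a < 1)
    (y : ℝ) (r : ℤ) :
    |sinc (((r : ℝ) - y) / a)| ^ N ≤ 8 / (((r : ℝ) - (⌊y⌋ : ℤ)) ^ 2 + 1) := by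
  set k : ℤ := r - ⌊y⌋ with hk
  have hkr : ((r : ℝ) - (⌊y⌋ : ℤ)) = (k : ℝ) := by push_cast [hk]; ring
  rw [hkr]
  have hden : (0 : ℝ) < (k : ℝ) ^ 2 + 1 := by positivity
  have hnn : (0 : ℝ) ≤ |sinc (((r : ℝ) - y) / a)| := abs_nonneg _
  by_cases hk2 : |k| ≤ 1
  · have hkk : |(k : ℝ)| ≤ 1 := by exact_mod_cast hk2
    have hsq : (k : ℝ) ^ 2 ≤ 1 := by
      rw [← sq_abs]; nlinarith [abs_nonneg (k : ℝ)]
    have h1 : |sinc (((r : ℝ) - y) / a)| ^ N ≤ 1 :=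
      pow_le_one₀ hnn (abs_sinc_le_one _)
    refine h1.trans ?_
    rw [le_div_iff₀ hden]; nlinarith
  · push_neg at hk2
    have hk2' : (2 : ℤ) ≤ |k| := hk2
    have hK : (2 : ℝ) ≤ |(k : ℝ)| := by exact_mod_cast hk2'
    set K := |(k : ℝ)| with hKdef
    have hfr0 : 0 ≤ Int.fract y := Int.fract_nonneg y
    have hfr1 : Int.fract y < 1 := Int.fract_lt_one y
    have hry : (r : ℝ) - y = (k : ℝ) - Int.fract y := by
      have hfl : ((⌊y⌋ : ℝ)) + Int.fract y = y := Int.floor_add_fract y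
      push_cast [hk]
      linarith
    have habs : K / 2 ≤ |(r : ℝ) - y| := by
      rw [hry]
      have h1 : |(k : ℝ)| - |Int.fract y| ≤ |(k : ℝ) - Int.fract y| :=
        abs_sub_abs_le_abs_sub _ _
      have h2 : |Int.fract y| < 1 := by rw [abs_of_nonneg hfr0]; exact hfr1
      have : K - 1 ≤ |(k : ℝ) - Int.fract y| := by rw [hKdef]; linarith
      linarith
    have hone : 1 ≤ |(r : ℝ) - y| := by linarith
    have hne : (r : ℝ) - y ≠ 0 := by
      intro h; rw [h] at hone; simp at hone; linarith
    have hne' : ((r : ℝ) - y) / a ≠ 0 := div_ne_zero hne ha.ne'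
    have hb1 : |sinc (((r : ℝ) - y) / a)| ≤ 1 / K := by
      have h1 : |sinc (((r : ℝ) - y) / a)| ≤ 1 / (π * |((r : ℝ) - y) / a|) :=
        abs_sinc_le _ hne'
      have h2 : |((r : ℝ) - y) / a| = |(r : ℝ) - y| / a := by
        rw [abs_div, abs_of_pos ha]
      have h3 : 1 / (π * |((r : ℝ) - y) / a|) = a / (π * |(r : ℝ) - y|) := by
        rw [h2]; field_simp
      rw [h3] at h1
      refine h1.trans ?_
      rw [div_le_div_iff₀ (by positivity) (by linarith)]
      have hpi : (2 : ℝ) < π := by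
        have := Real.pi_gt_three; linarith
      nlinarith [abs_nonneg ((r : ℝ) - y)]
    have hKpos : 0 < 1 / K := by positivity
    have hb2 : |sinc (((r : ℝ) - y) / a)| ^ N ≤ (1 / K) ^ N :=
      pow_le_pow_left₀ hnn hb1 N
    have hb3 : (1 / K) ^ N ≤ (1 / K) ^ 2 := by
      apply pow_le_pow_of_le_one hKpos.le _ hN
      rw [div_le_one (by linarith)]; linarith
    have hb4 : (1 / K) ^ 2 = 1 / (k : ℝ) ^ 2 := by
      rw [div_pow, one_pow, hKdef, sq_abs]
    have hksq : (4 : ℝ) ≤ (k : ℝ) ^ 2 := by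
      rw [← sq_abs]; nlinarith
    refine hb2.trans (hb3.trans_eq hb4 |>.trans ?_)
    rw [div_le_div_iff₀ (by nlinarith) hden]
    nlinarith

lemma summable_aux : Summable (fun k : ℤ => (8 : ℝ) / ((k : ℝ) ^ 2 + 1)) := by
  have hbase : Summable (fun n : ℕ => (16 : ℝ) / ((n : ℝ) + 1) ^ 2) := by
    have h0 : Summable (fun n : ℕ => 1 / ((n : ℝ)) ^ 2) :=
      Real.summable_one_div_nat_pow.mpr one_lt_two
    have h1 := (_root_.summable_nat_add_iff (f := fun n : ℕ => 1 / ((n : ℝ)) ^ 2) 1).mpr h0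
    refine (h1.mul_left (16 : ℝ)).congr fun n => ?_
    push_cast
    rw [mul_one_div]
  have key : ∀ n : ℕ, (8 : ℝ) / ((n : ℝ) ^ 2 + 1) ≤ 16 / ((n : ℝ) + 1) ^ 2 := by
    intro n
    rw [div_le_div_iff₀ (by positivity) (by positivity)]
    have hn : (0 : ℝ) ≤ (n : ℝ) := Nat.cast_nonneg n
    nlinarith [sq_nonneg ((n : ℝ) - 1)]
  apply Summable.of_nat_of_neg
  · exact Summable.of_nonneg_of_le (fun n => by positivity) (fun n => key n) hbase
  · refine Summable.of_nonneg_of_le (fun n => by positivity) (fun n => ?_) hbase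
    have : ((-(n : ℤ) : ℤ) : ℝ) ^ 2 = (n : ℝ) ^ 2 := by push_cast; ring
    rw [this]; exact key n

lemma summable_shift (m : ℤ) :
    Summable (fun r : ℤ => (8 : ℝ) / (((r : ℝ) - (m : ℝ)) ^ 2 + 1)) := by
  rw [← (Equiv.addRight m).summable_iff
    (f := fun r : ℤ => (8 : ℝ) / (((r : ℝ) - (m : ℝ)) ^ 2 + 1))]
  convert summable_aux using 1
  funext k
  simp only [Function.comp, Equiv.coe_addRight]
  push_cast; ring_nf

lemma tsum_shift (m : ℤ) :
    ∑' r : ℤ, (8 : ℝ) / (((r : ℝ) - (m : ℝ)) ^ 2 + 1)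
      = ∑' k : ℤ, (8 : ℝ) / ((k : ℝ) ^ 2 + 1) := by
  rw [← (Equiv.addRight m).tsum_eq
    (f := fun r : ℤ => (8 : ℝ) / (((r : ℝ) - (m : ℝ)) ^ 2 + 1))]
  apply tsum_congr
  intro k
  simp only [Equiv.coe_addRight]
  push_cast; ring_nf

set_option maxHeartbeats 1600000 in
/-- N-th order decay of the off-diagonal symbols: there is a constant
C = C(N,a,b) such that for all |ℓ| > 4/(ab), sup_{x∈[-1/2,1/2]} |t^{[ℓ]}(x)| ≤ C|ℓ|^{-N}. -/
theorem offdiagonal_symbol_decay (N : ℕ) (hN : 2 ≤ N) (a b : ℝ)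
    (ha : 0 < a) (ha1 : a < 1) (hb : 0 < b) :
    ∃ C : ℝ, 0 < C ∧ ∀ ℓ : ℤ, 4 / (a * b) < |(ℓ : ℝ)| →
      ∀ x ∈ Set.Icc (-(1 : ℝ) / 2) (1 / 2),
        |(1 / a) * ∑' r : ℤ,
            sinc (((r : ℝ) - (x - a * b * (ℓ : ℝ) / 2)) / a) ^ N *
              sinc (((r : ℝ) - (x + a * b * (ℓ : ℝ) / 2)) / a) ^ N|
          ≤ C / |(ℓ : ℝ)| ^ N := by
  set S : ℝ := ∑' k : ℤ, (8 : ℝ) / ((k : ℝ) ^ 2 + 1) with hS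
  have hSpos : 0 < S := by
    apply Summable.tsum_pos summable_aux (fun k => by positivity) 0
    norm_num
  have hCpos : 0 < (1 / a) * (2 / (π * b)) ^ N * (2 * S) := by
    have hπ := Real.pi_pos
    apply mul_pos (mul_pos (by positivity) (by positivity))
    linarith
  refine ⟨(1 / a) * (2 / (π * b)) ^ N * (2 * S), hCpos, ?_⟩
  intro ℓ hℓ x hx
  have habd : (0 : ℝ) < a * b := by positivity
  have hL : 0 < |(ℓ : ℝ)| := lt_trans (by positivity) hℓ
  set d : ℝ := a * b * (ℓ : ℝ) / 2 with hd
  set y₁ : ℝ := x - d with hy₁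
  set y₂ : ℝ := x + d with hy₂
  have hdabs : |d| = a * b / 2 * |(ℓ : ℝ)| := by
    rw [hd]
    rw [abs_div, abs_mul, abs_of_pos habd]
    norm_num; ring
  have hd2 : 2 < |d| := by
    rw [hdabs]
    have : 4 < a * b * |(ℓ : ℝ)| := by
      rw [div_lt_iff₀ habd] at hℓ; linarith
    linarith
  set M : ℝ := a / (π * |d|) with hM
  have hMpos : 0 < M := by rw [hM]; positivity
  set g : ℤ → ℝ := fun r =>
    M ^ N * (8 / (((r : ℝ) - (⌊y₁⌋ : ℤ)) ^ 2 + 1) + 8 / (((r : ℝ) - (⌊y₂⌋ : ℤ)) ^ 2 + 1))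
    with hg
  set f : ℤ → ℝ := fun r =>
    sinc (((r : ℝ) - y₁) / a) ^ N * sinc (((r : ℝ) - y₂) / a) ^ N with hf
  -- per-term bound
  have hterm : ∀ r : ℤ, |f r| ≤ g r := by
    intro r
    have habs : |f r| = |sinc (((r : ℝ) - y₁) / a)| ^ N * |sinc (((r : ℝ) - y₂) / a)| ^ N := by
      rw [hf]; rw [abs_mul, abs_pow, abs_pow]
    have hfar : ∀ y : ℝ, |d| ≤ |(r : ℝ) - y| →
        |sinc (((r : ℝ) - y) / a)| ^ N ≤ M ^ N := by
      intro y hy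
      apply pow_le_pow_left₀ (abs_nonneg _)
      have hne : (r : ℝ) - y ≠ 0 := by
        intro h; rw [h, abs_zero] at hy; linarith
      have h1 := abs_sinc_le (((r : ℝ) - y) / a) (div_ne_zero hne ha.ne')
      have h2 : |((r : ℝ) - y) / a| = |(r : ℝ) - y| / a := by
        rw [abs_div, abs_of_pos ha]
      have h3 : 1 / (π * |((r : ℝ) - y) / a|) = a / (π * |(r : ℝ) - y|) := by
        rw [h2]
        have : |(r : ℝ) - y| ≠ 0 := abs_ne_zero.mpr hne
        field_simp
      rw [h3] at h1
      refine h1.trans ?_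
      rw [hM]
      apply div_le_div_of_nonneg_left ha.le (by positivity)
      have : 0 < |(r : ℝ) - y| := by linarith
      nlinarith [Real.pi_pos]
    have hsplit : |d| ≤ |(r : ℝ) - y₁| ∨ |d| ≤ |(r : ℝ) - y₂| := by
      by_contra h
      push_neg at h
      obtain ⟨h1, h2⟩ := h
      have key : ((r : ℝ) - y₁) - ((r : ℝ) - y₂) = 2 * d := by
        rw [hy₁, hy₂]; ring
      have := abs_sub ((r : ℝ) - y₁) ((r : ℝ) - y₂)
      rw [key] at this
      rw [abs_mul] at this
      simp only [abs_two] at this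
      linarith
    rw [habs, hg]
    have hnn1 : (0 : ℝ) ≤ |sinc (((r : ℝ) - y₁) / a)| ^ N := by positivity
    have hnn2 : (0 : ℝ) ≤ |sinc (((r : ℝ) - y₂) / a)| ^ N := by positivity
    have hG1 : (0 : ℝ) ≤ 8 / (((r : ℝ) - (⌊y₁⌋ : ℤ)) ^ 2 + 1) := by positivity
    have hG2 : (0 : ℝ) ≤ 8 / (((r : ℝ) - (⌊y₂⌋ : ℤ)) ^ 2 + 1) := by positivity
    rcases hsplit with hc | hc
    · have b1 := hfar y₁ hc
      have b2 := sinc_pow_bound N hN a ha ha1 y₂ r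
      calc |sinc (((r : ℝ) - y₁) / a)| ^ N * |sinc (((r : ℝ) - y₂) / a)| ^ N
          ≤ M ^ N * (8 / (((r : ℝ) - (⌊y₂⌋ : ℤ)) ^ 2 + 1)) :=
            mul_le_mul b1 b2 hnn2 (by positivity)
        _ ≤ _ := by nlinarith [pow_pos hMpos N]
    · have b1 := sinc_pow_bound N hN a ha ha1 y₁ r
      have b2 := hfar y₂ hc
      calc |sinc (((r : ℝ) - y₁) / a)| ^ N * |sinc (((r : ℝ) - y₂) / a)| ^ N
          ≤ (8 / (((r : ℝ) - (⌊y₁⌋ : ℤ)) ^ 2 + 1)) * M ^ N :=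
            mul_le_mul b1 b2 hnn2 hG1
        _ ≤ _ := by nlinarith [pow_pos hMpos N]
  have hgsum : Summable g := by
    rw [hg]
    apply Summable.mul_left
    exact (summable_shift ⌊y₁⌋).add (summable_shift ⌊y₂⌋)
  have hfabs : Summable (fun r => |f r|) :=
    Summable.of_nonneg_of_le (fun r => abs_nonneg _) hterm hgsum
  have hfsum : Summable f := summable_abs_iff.mp hfabs
  have htsum1 : |∑' r : ℤ, f r| ≤ ∑' r : ℤ, |f r| := by
    rw [← Real.norm_eq_abs]
    refine (norm_tsum_le_tsum_norm ?_).trans_eq ?_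
    · simpa only [Real.norm_eq_abs] using hfabs
    · simp only [Real.norm_eq_abs]
  have htsum2 : ∑' r : ℤ, |f r| ≤ ∑' r : ℤ, g r := Summable.tsum_le_tsum hterm hfabs hgsum
  have htsum3 : ∑' r : ℤ, g r = M ^ N * (2 * S) := by
    rw [hg]
    rw [tsum_mul_left]
    congr 1
    rw [Summable.tsum_add (summable_shift ⌊y₁⌋) (summable_shift ⌊y₂⌋)]
    rw [tsum_shift, tsum_shift, hS]
    ring
  -- compute M
  have hMval : M = 2 / (π * b) * (1 / |(ℓ : ℝ)|) := by
    rw [hM, hdabs]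
    field_simp
  have hMN : M ^ N = (2 / (π * b)) ^ N / |(ℓ : ℝ)| ^ N := by
    rw [hMval, mul_pow, one_div, inv_pow]
    ring
  have hfinal : |∑' r : ℤ, f r| ≤ M ^ N * (2 * S) := by
    calc |∑' r : ℤ, f r| ≤ ∑' r : ℤ, |f r| := htsum1
      _ ≤ ∑' r : ℤ, g r := htsum2
      _ = M ^ N * (2 * S) := htsum3
  have hgoal : |(1 / a) * ∑' r : ℤ, f r| ≤ (1 / a) * (M ^ N * (2 * S)) := by
    rw [abs_mul, abs_of_pos (by positivity : (0:ℝ) < 1 / a)]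
    exact mul_le_mul_of_nonneg_left hfinal (by positivity)
  refine hgoal.trans_eq ?_
  rw [hMN]
  ring
end
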